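/- arXiv:2502.01416 — 2 statements merged into one kernel-verified Lean document; each statement's English description precedes it below -/
import Mathlib

section
/- Let X be a nonempty finite set, N ≥ 1, and let q^ref be a Markov process on X^{N+2} with full support. Let q be a process on X^{N+2} that is reciprocal with respect to q^ref and whose endpoint coupling q(x_0, x_1) has full support on X² (so q has full support on X^{N+2}). Define, for each Markov process m on X^{N+2} with full-support transition probabilities, L(m) := E_{q(x_0,x_1)} [ Σ_{n=1}^{N} E_{q^ref(x_{t_{n-1}} | x_0, x_1)} KL( q^ref(x_{t_n} | x_{t_{n-1}}, x_1) || m(x_{t_n} | x_{t_{n-1}}) ) − E_{q^ref(x_{t_N} | x_0, x_1)} [ log m(x_1 | x_{t_N}) ] ]. Then among all Markov processes m with full-support transition probabilities and m(x_0) = q(x_0), the Markovian projection proj_M(q) is the unique minimizer of L(m). -/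
open Finset

/-- A probability mass function on a finite type. -/
def IsPMF {Z : Type*} [Fintype Z] (p : Z → ℝ) : Prop :=
  (∀ z, 0 ≤ p z) ∧ ∑ z, p z = 1

/-- KL divergence between two pmfs on a finite type (with `0 log 0 := 0`,
which is automatic since `0 * log (0/b) = 0`). -/
noncomputable def KLd {Z : Type*} [Fintype Z] (a b : Z → ℝ) : ℝ :=
  ∑ z, a z * Real.log (a z / b z)

/-- Trajectories with `N` intermediate time steps: indices `0, 1, …, N+1`,
where index `0` is time `0` and index `N+1` is time `1`. -/
abbrev Traj (X : Type*) (N : ℕ) := Fin (N + 2) → X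

variable {X : Type*} [Fintype X] [DecidableEq X] {N : ℕ}

/-- One-time marginal of a process at time index `i`. -/
noncomputable def timeMarg (q : Traj X N → ℝ) (i : Fin (N + 2)) (x : X) : ℝ :=
  ∑ ω : Traj X N, if ω i = x then q ω else 0

/-- Joint marginal of the endpoints `(x_0, x_1)`. -/
noncomputable def endMarg (q : Traj X N → ℝ) (a b : X) : ℝ :=
  ∑ ω : Traj X N, if ω 0 = a ∧ ω (Fin.last (N + 1)) = b then q ω else 0

/-- Joint marginal at the neighboring time indices `n` and `n+1`. -/
noncomputable def pairMarg (q : Traj X N → ℝ) (n : Fin (N + 1)) (y z : X) : ℝ :=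
  ∑ ω : Traj X N, if ω n.castSucc = y ∧ ω n.succ = z then q ω else 0

/-- Transition probability `q(x_{t_n} = z | x_{t_{n-1}} = y)` for the step from
time index `n` to `n+1`. -/
noncomputable def transP (q : Traj X N → ℝ) (n : Fin (N + 1)) (y z : X) : ℝ :=
  pairMarg q n y z / timeMarg q n.castSucc y

/-- Glue endpoints `a`, `b` and inner states `v` into a trajectory. -/
def glue (a : X) (v : Fin N → X) (b : X) : Traj X N :=
  Fin.cons a (Fin.snoc v b)

/-- The bridge `q(x_in | x_0 = a, x_1 = b)`, as a function of the inner states. -/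
noncomputable def bridge (q : Traj X N → ℝ) (a b : X) (v : Fin N → X) : ℝ :=
  q (glue a v b) / endMarg q a b

/-- A process is Markov if it factorizes through its one-step transitions. -/
def IsMarkov (q : Traj X N → ℝ) : Prop :=
  ∀ ω : Traj X N,
    q ω = timeMarg q 0 (ω 0) * ∏ n : Fin (N + 1), transP q n (ω n.castSucc) (ω n.succ)

/-- A process `q` is reciprocal w.r.t. a full-support reference process `qref` if its
bridges coincide with those of `qref` wherever they are defined. -/
def IsReciprocal (qref q : Traj X N → ℝ) : Prop :=
  ∀ a b : X, 0 < endMarg q a b → ∀ v : Fin N → X, bridge q a b v = bridge qref a b v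

/-- Reciprocal projection of `q` w.r.t. `qref`:
`proj_R(q)(x_0, x_in, x_1) = qref(x_in | x_0, x_1) · q(x_0, x_1)`. -/
noncomputable def projR (qref q : Traj X N → ℝ) (ω : Traj X N) : ℝ :=
  (qref ω / endMarg qref (ω 0) (ω (Fin.last (N + 1)))) *
    endMarg q (ω 0) (ω (Fin.last (N + 1)))

/-- Markovian projection of `q`:
`proj_M(q)(x_0, x_in, x_1) = q(x_0) ∏_{n=1}^{N+1} q(x_{t_n} | x_{t_{n-1}})`. -/
noncomputable def projM (q : Traj X N → ℝ) (ω : Traj X N) : ℝ :=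
  timeMarg q 0 (ω 0) * ∏ n : Fin (N + 1), transP q n (ω n.castSucc) (ω n.succ)

/-- Marginal of the bridge of `q` at time index `i`:
`q(x_{t_i} = y | x_0 = a, x_1 = b)`. -/
noncomputable def bridgeAt (q : Traj X N → ℝ) (i : Fin (N + 2)) (y a b : X) : ℝ :=
  (∑ ω : Traj X N, if ω 0 = a ∧ ω i = y ∧ ω (Fin.last (N + 1)) = b then q ω else 0) /
    endMarg q a b

/-- Conditional transition given the terminal point:
`q(x_{t_n} = z | x_{t_{n-1}} = y, x_1 = b)` for the step from time index `n` to `n+1`. -/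
noncomputable def condTrans (q : Traj X N → ℝ) (n : Fin (N + 1)) (y z b : X) : ℝ :=
  (∑ ω : Traj X N,
      if ω n.castSucc = y ∧ ω n.succ = z ∧ ω (Fin.last (N + 1)) = b then q ω else 0) /
    (∑ ω : Traj X N, if ω n.castSucc = y ∧ ω (Fin.last (N + 1)) = b then q ω else 0)

/-- Membership in `Π_N(p_0, p_1)`: a process with prescribed marginals at times 0 and 1. -/
def InPiN (p0 p1 : X → ℝ) (q : Traj X N → ℝ) : Prop :=
  IsPMF q ∧ (∀ x, timeMarg q 0 x = p0 x) ∧ (∀ x, timeMarg q (Fin.last (N + 1)) x = p1 x)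

/-- Membership in `Π(p_0, p_1)`: couplings on `X²` with prescribed marginals. -/
def InPi2 (p0 p1 : X → ℝ) (s : X × X → ℝ) : Prop :=
  IsPMF s ∧ (∀ a, ∑ b, s (a, b) = p0 a) ∧ (∀ b, ∑ a, s (a, b) = p1 b)

/-
Reciprocity lets one replace `q(· | x_0, x_1)` by the bridge of `qref`, and the Markov property
of `qref` makes `x_0` and `x_{t_{n+1}}` conditionally independent given `(x_{t_n}, x_1)`. Together
they collapse the averaged bridge quantities in `L` onto the two-time marginals of `q`:
`L(m) = C - Σ_n E_{q(x_{t_n}, x_{t_{n+1}})} log m(x_{t_{n+1}} | x_{t_n})` with `C` independent of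
`m` (the terminal term of `L` is the step `n = N`). By Gibbs' inequality this cross-entropy is
minimal exactly when the transitions of `m` are those of `q`, which are also the transitions of
`proj_M(q)`; a Markov process is determined by its initial law and its transitions.
-/

open InformationTheory

theorem Fintype.sum_ite_pos {α : Type*} [Fintype α] {p : α → ℝ} (hp : ∀ a, 0 < p a)
    {P : α → Prop} [DecidablePred P] {a₀ : α} (h : P a₀) :
    0 < ∑ a, if P a then p a else 0 :=
  Finset.sum_pos' (fun a _ => by split_ifs <;> simp [(hp a).le]) ⟨a₀, mem_univ _, by simp [h, hp]⟩

theorem KLd_eq_sub {Z : Type*} [Fintype Z] (s t : Z → ℝ) (ht : ∀ z, t z ≠ 0) :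
    KLd s t = ∑ z, s z * Real.log (s z) - ∑ z, s z * Real.log (t z) := by
  rw [KLd, ← Finset.sum_sub_distrib]
  refine Finset.sum_congr rfl fun z _ => ?_
  rcases eq_or_ne (s z) 0 with hs | hs
  · simp [hs]
  · rw [Real.log_div hs (ht z)]
    ring

theorem mul_klFun_div {p r : ℝ} (hp : 0 < p) (hr : 0 < r) :
    r * klFun (p / r) = p * (Real.log p - Real.log r) + (r - p) := by
  rw [klFun_apply, Real.log_div hp.ne' hr.ne']
  field_simp
  ring

namespace MarkovChain

variable {S : Type*} {k : ℕ}

noncomputable def chainWeight (μ : S → ℝ) (T : Fin k → S → S → ℝ) (ω : Fin (k + 1) → S) : ℝ :=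
  μ (ω 0) * ∏ i : Fin k, T i (ω i.castSucc) (ω i.succ)

theorem sum_snoc [Fintype S] (f : (Fin (k + 1) → S) → ℝ) :
    ∑ ω, f ω = ∑ v : Fin k → S, ∑ x : S, f (Fin.snoc v x) := by
  rw [← (Fin.snocEquiv fun _ => S).sum_comp, Fintype.sum_prod_type_right]
  rfl

theorem chainWeight_snoc (μ : S → ℝ) (T : Fin (k + 1) → S → S → ℝ) (v : Fin (k + 1) → S)
    (x : S) :
    chainWeight μ T (Fin.snoc v x) =
      chainWeight μ (fun i => T i.castSucc) v * T (Fin.last k) (v (Fin.last k)) x := by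
  rw [chainWeight, chainWeight, Fin.prod_univ_castSucc]
  simp only [Fin.snoc_castSucc, Fin.succ_castSucc, Fin.succ_last, Fin.snoc_last,
    ← Fin.castSucc_zero, mul_assoc]

theorem sum_chainWeight_snoc [Fintype S] (μ : S → ℝ) {T : Fin (k + 1) → S → S → ℝ}
    (hT : ∀ y, ∑ z, T (Fin.last k) y z = 1) (v : Fin (k + 1) → S) :
    ∑ x, chainWeight μ T (Fin.snoc v x) = chainWeight μ (fun i => T i.castSucc) v := by
  simp only [chainWeight_snoc, ← Finset.mul_sum, hT, mul_one]

theorem sum_ite_chainWeight_pair [Fintype S] [DecidableEq S] (μ : S → ℝ) :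
    ∀ {k : ℕ} (T : Fin k → S → S → ℝ), (∀ i y, ∑ z, T i y z = 1) → ∀ (i : Fin k) (y z : S),
      ∑ ω, (if ω i.castSucc = y ∧ ω i.succ = z then chainWeight μ T ω else 0) =
        (∑ ω, if ω i.castSucc = y then chainWeight μ T ω else 0) * T i y z
  | 0, _, _, i => i.elim0
  | k + 1, T, hT, i => by
    intro y z
    rw [sum_snoc (k := k + 1), sum_snoc (k := k + 1)]
    induction i using Fin.lastCases with
    | last =>
      simp only [Fin.snoc_castSucc, Fin.succ_last, Fin.snoc_last, chainWeight_snoc, ite_and,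
        Finset.sum_ite_irrel, Finset.sum_const_zero, Finset.sum_ite_eq', Finset.mem_univ, if_true,
        ← Finset.mul_sum, hT, mul_one, Finset.sum_mul]
      refine Finset.sum_congr rfl fun v _ => ?_
      split_ifs with h <;> simp [h]
    | cast j =>
      simp only [Fin.snoc_castSucc, Fin.succ_castSucc, Finset.sum_ite_irrel,
        Finset.sum_const_zero, sum_chainWeight_snoc μ (hT _)]
      exact sum_ite_chainWeight_pair μ (fun i => T i.castSucc) (fun i => hT _) j y z

def splice (c : Fin (k + 1)) (ω τ : Fin (k + 1) → S) : Fin (k + 1) → S :=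
  fun i => if i ≤ c then ω i else τ i

theorem splice_of_le {c i : Fin (k + 1)} (h : i ≤ c) (ω τ : Fin (k + 1) → S) :
    splice c ω τ i = ω i := if_pos h

theorem splice_of_lt {c i : Fin (k + 1)} (h : c < i) (ω τ : Fin (k + 1) → S) :
    splice c ω τ i = τ i := if_neg h.not_ge

theorem splice_splice (c : Fin (k + 1)) (ω τ : Fin (k + 1) → S) :
    splice c (splice c ω τ) (splice c τ ω) = ω := by
  funext i
  by_cases h : i ≤ c <;> simp [splice, h]

theorem chainWeight_splice_mul (μ : S → ℝ) (T : Fin k → S → S → ℝ) {c : Fin (k + 1)}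
    {ω τ : Fin (k + 1) → S} (h : ω c = τ c) :
    chainWeight μ T (splice c ω τ) * chainWeight μ T (splice c τ ω) =
      chainWeight μ T ω * chainWeight μ T τ := by
  have step : ∀ i : Fin k,
      T i (splice c ω τ i.castSucc) (splice c ω τ i.succ) *
          T i (splice c τ ω i.castSucc) (splice c τ ω i.succ) =
        T i (ω i.castSucc) (ω i.succ) * T i (τ i.castSucc) (τ i.succ) := by
    intro i
    rcases lt_trichotomy i.castSucc c with hlt | rfl | hgt
    · have hle : i.succ ≤ c := Fin.castSucc_lt_iff_succ_le.mp hlt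
      simp only [splice_of_le hlt.le, splice_of_le hle]
    · simp only [splice_of_le le_rfl, splice_of_lt (Fin.castSucc_lt_succ (i := i)), h]
      ring
    · simp only [splice_of_lt hgt, splice_of_lt (hgt.trans (Fin.castSucc_lt_succ (i := i)))]
      ring
  simp only [chainWeight, splice_of_le (Fin.zero_le c)]
  calc _ = μ (ω 0) * μ (τ 0) * ∏ i : Fin k,
        T i (splice c ω τ i.castSucc) (splice c ω τ i.succ) *
          T i (splice c τ ω i.castSucc) (splice c τ ω i.succ) := by
        rw [Finset.prod_mul_distrib]; ring
    _ = _ := by simp only [step, Finset.prod_mul_distrib]; ring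

/-- `x_0` and `x_{i+1}` are conditionally independent given `(x_i, x_k)`: exchanging the futures
after time `i` of two paths that meet at time `i` preserves the product of their weights. -/
theorem sum_ite_chainWeight_condIndep [Fintype S] [DecidableEq S] (μ : S → ℝ)
    (T : Fin k → S → S → ℝ) (i : Fin k) (a y z b : S) :
    (∑ ω, if ω 0 = a ∧ (ω i.castSucc = y ∧ ω i.succ = z) ∧ ω (Fin.last k) = b
        then chainWeight μ T ω else 0) *
      (∑ ω, if ω i.castSucc = y ∧ ω (Fin.last k) = b then chainWeight μ T ω else 0) =
    (∑ ω, if ω 0 = a ∧ ω i.castSucc = y ∧ ω (Fin.last k) = b then chainWeight μ T ω else 0) *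
      (∑ ω, if ω i.castSucc = y ∧ ω i.succ = z ∧ ω (Fin.last k) = b
        then chainWeight μ T ω else 0) := by
  set c := i.castSucc
  have swap : Function.Involutive fun p : (Fin (k + 1) → S) × (Fin (k + 1) → S) =>
      (splice c p.1 p.2, splice c p.2 p.1) := fun p => by simp [splice_splice]
  simp only [Finset.sum_mul_sum, ite_zero_mul_ite_zero, ← Fintype.sum_prod_type']
  rw [← Equiv.sum_comp (swap.toPerm _)]
  refine Fintype.sum_congr _ _ fun ⟨ω, τ⟩ => ?_
  have h0 : (0 : Fin (k + 1)) ≤ c := Fin.zero_le c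
  have h1 : c < i.succ := Fin.castSucc_lt_succ
  have h2 : c < Fin.last k := Fin.castSucc_lt_last i
  simp only [Function.Involutive.coe_toPerm, splice_of_le h0, splice_of_le le_rfl,
    splice_of_lt h1, splice_of_lt h2]
  by_cases h : (ω 0 = a ∧ ω c = y ∧ ω (Fin.last k) = b) ∧
      (τ c = y ∧ τ i.succ = z ∧ τ (Fin.last k) = b)
  · rw [if_pos (by tauto), if_pos h]
    exact chainWeight_splice_mul μ T (h.1.2.1.trans h.2.1.symm)
  · rw [if_neg (by tauto), if_neg h]

end MarkovChain

open MarkovChain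

section Marginals

variable {p : Traj X N → ℝ}

theorem sum_ite_and_pos (hp : ∀ ω, 0 < p ω) {i j : Fin (N + 2)} (hij : i ≠ j) (x y : X) :
    0 < ∑ ω : Traj X N, if ω i = x ∧ ω j = y then p ω else 0 :=
  Fintype.sum_ite_pos hp (a₀ := Function.update (fun _ => y) i x) ⟨by simp, by simp [hij.symm]⟩

theorem timeMarg_pos (hp : ∀ ω, 0 < p ω) (i : Fin (N + 2)) (x : X) : 0 < timeMarg p i x :=
  Fintype.sum_ite_pos hp (a₀ := fun _ => x) rfl

theorem endMarg_pos (hp : ∀ ω, 0 < p ω) (a b : X) : 0 < endMarg p a b :=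
  sum_ite_and_pos hp Fin.last_pos.ne a b

theorem transP_pos (hp : ∀ ω, 0 < p ω) (n : Fin (N + 1)) (y z : X) : 0 < transP p n y z :=
  div_pos (sum_ite_and_pos hp Fin.castSucc_lt_succ.ne y z) (timeMarg_pos hp _ y)

theorem sum_pairMarg (p : Traj X N → ℝ) (n : Fin (N + 1)) (y : X) :
    ∑ z, pairMarg p n y z = timeMarg p n.castSucc y := by
  simp only [pairMarg, timeMarg]
  rw [Finset.sum_comm]
  refine Finset.sum_congr rfl fun ω _ => ?_
  simp [ite_and, eq_comm]

theorem sum_transP {n : Fin (N + 1)} {y : X} (h : timeMarg p n.castSucc y ≠ 0) :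
    ∑ z, transP p n y z = 1 := by
  simp only [transP, ← Finset.sum_div, sum_pairMarg, div_self h]

theorem timeMarg_mul_transP {n : Fin (N + 1)} {y : X} (h : timeMarg p n.castSucc y ≠ 0)
    (z : X) : timeMarg p n.castSucc y * transP p n y z = pairMarg p n y z :=
  mul_div_cancel₀ _ h

theorem sum_ite_eq_sum_endpoints (P : Traj X N → Prop) [DecidablePred P] (f : Traj X N → ℝ) :
    ∑ ω, (if P ω then f ω else 0) =
      ∑ a, ∑ b, ∑ ω, if ω 0 = a ∧ P ω ∧ ω (Fin.last (N + 1)) = b then f ω else 0 := by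
  calc ∑ ω, (if P ω then f ω else 0)
      = ∑ ω, ∑ a, ∑ b, if ω 0 = a ∧ P ω ∧ ω (Fin.last (N + 1)) = b then f ω else 0 :=
        Finset.sum_congr rfl fun ω _ => by simp [ite_and, Finset.sum_ite_eq]
    _ = _ := by
        rw [Finset.sum_comm]
        exact Finset.sum_congr rfl fun _ _ => Finset.sum_comm

theorem projM_pos (h0 : ∀ x, 0 < timeMarg p 0 x) (hT : ∀ n y z, 0 < transP p n y z)
    (ω : Traj X N) : 0 < projM p ω :=
  mul_pos (h0 _) (Finset.prod_pos fun _ _ => hT _ _ _)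

theorem IsMarkov.sum_transP (hp : IsMarkov p) (h0 : ∀ x, 0 < timeMarg p 0 x)
    (hT : ∀ n y z, 0 < transP p n y z) (n : Fin (N + 1)) (y : X) : ∑ z, transP p n y z = 1 :=
  _root_.sum_transP (timeMarg_pos (fun ω => (projM_pos h0 hT ω).trans_eq (hp ω).symm) _ y).ne'

theorem IsMarkov.eq_projM {m : Traj X N → ℝ} (hm : IsMarkov m)
    (h0 : timeMarg m 0 = timeMarg p 0) (hT : transP m = transP p) : m = projM p :=
  funext fun ω => by rw [hm ω, projM, h0, hT]

theorem transP_projM (hp : ∀ ω, 0 < p ω) : transP (projM p) = transP p := by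
  funext n y z
  have hpair : pairMarg (projM p) n y z = timeMarg (projM p) n.castSucc y * transP p n y z :=
    sum_ite_chainWeight_pair _ _ (fun n y => sum_transP (timeMarg_pos hp _ y).ne') n y z
  have hproj : ∀ ω, 0 < projM p ω := projM_pos (timeMarg_pos hp 0) (transP_pos hp)
  rw [transP, hpair, mul_div_cancel_left₀ _ (timeMarg_pos hproj _ y).ne']

theorem IsMarkov.condIndep (hp : IsMarkov p) (n : Fin (N + 1)) (a y z b : X) :
    (∑ ω : Traj X N, if ω 0 = a ∧ (ω n.castSucc = y ∧ ω n.succ = z) ∧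
        ω (Fin.last (N + 1)) = b then p ω else 0) *
      (∑ ω : Traj X N, if ω n.castSucc = y ∧ ω (Fin.last (N + 1)) = b then p ω else 0) =
    (∑ ω : Traj X N, if ω 0 = a ∧ ω n.castSucc = y ∧ ω (Fin.last (N + 1)) = b
        then p ω else 0) *
      (∑ ω : Traj X N, if ω n.castSucc = y ∧ ω n.succ = z ∧ ω (Fin.last (N + 1)) = b
        then p ω else 0) := by
  have h := sum_ite_chainWeight_condIndep (timeMarg p 0) (transP p) n a y z b
  rwa [← show p = chainWeight (timeMarg p 0) (transP p) from funext hp] at h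

theorem condTrans_last (hp : ∀ ω, 0 < p ω) (y z b : X) :
    condTrans p (Fin.last N) y z b = if z = b then 1 else 0 := by
  have hden := (sum_ite_and_pos hp (Fin.castSucc_lt_last (Fin.last N)).ne y b).ne'
  rw [condTrans, Fin.succ_last]
  split_ifs with hzb
  · subst hzb
    simp only [and_self, div_self hden]
  · rw [Finset.sum_eq_zero fun ω _ => if_neg fun h => hzb (h.2.1.symm.trans h.2.2), zero_div]

end Marginals

section Reciprocal

variable {qref q : Traj X N → ℝ}

theorem IsReciprocal.eq_projR (hR : IsReciprocal qref q) (hend : ∀ a b, 0 < endMarg q a b)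
    (ω : Traj X N) : q ω = projR qref q ω := by
  have hglue : glue (ω 0) (Fin.init (Fin.tail ω)) (ω (Fin.last (N + 1))) = ω := by
    rw [glue]
    conv_rhs => rw [← Fin.cons_self_tail ω, ← Fin.snoc_init_self (Fin.tail ω)]
    rfl
  have h := hR _ _ (hend (ω 0) (ω (Fin.last (N + 1)))) (Fin.init (Fin.tail ω))
  rwa [bridge, bridge, hglue, div_eq_iff (hend _ _).ne'] at h

theorem IsReciprocal.pos (hR : IsReciprocal qref q) (hend : ∀ a b, 0 < endMarg q a b)
    (hqref : ∀ ω, 0 < qref ω) (ω : Traj X N) : 0 < q ω := by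
  rw [hR.eq_projR hend, projR]
  exact mul_pos (div_pos (hqref ω) (endMarg_pos hqref _ _)) (hend _ _)

theorem IsReciprocal.sum_ite_eq (hR : IsReciprocal qref q) (hend : ∀ a b, 0 < endMarg q a b)
    (P : Traj X N → Prop) [DecidablePred P] (a b : X) :
    ∑ ω, (if ω 0 = a ∧ P ω ∧ ω (Fin.last (N + 1)) = b then q ω else 0) =
      endMarg q a b / endMarg qref a b *
        ∑ ω, if ω 0 = a ∧ P ω ∧ ω (Fin.last (N + 1)) = b then qref ω else 0 := by
  rw [Finset.mul_sum]
  refine Finset.sum_congr rfl fun ω _ => ?_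
  split_ifs with h
  · rw [hR.eq_projR hend, projR, h.1, h.2.2]
    ring
  · rw [mul_zero]

theorem IsReciprocal.sum_endMarg_mul_bridgeAt_mul_condTrans (hR : IsReciprocal qref q)
    (hend : ∀ a b, 0 < endMarg q a b) (hqref : ∀ ω, 0 < qref ω) (hM : IsMarkov qref)
    (n : Fin (N + 1)) (y z : X) :
    ∑ a, ∑ b, endMarg q a b * (bridgeAt qref n.castSucc y a b * condTrans qref n y z b) =
      pairMarg q n y z := by
  rw [pairMarg, sum_ite_eq_sum_endpoints]
  refine Finset.sum_congr rfl fun a _ => Finset.sum_congr rfl fun b _ => ?_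
  rw [hR.sum_ite_eq hend, bridgeAt, condTrans]
  have hend_ref := (endMarg_pos hqref a b).ne'
  have hcond := (sum_ite_and_pos hqref (Fin.castSucc_lt_last n).ne y b).ne'
  field_simp
  linear_combination (-endMarg q a b) * hM.condIndep n a y z b

theorem IsReciprocal.sum_endMarg_mul_sum_bridgeAt_mul_sum_condTrans (hR : IsReciprocal qref q)
    (hend : ∀ a b, 0 < endMarg q a b) (hqref : ∀ ω, 0 < qref ω) (hM : IsMarkov qref)
    (n : Fin (N + 1)) (f : X → X → ℝ) :
    ∑ a, ∑ b, endMarg q a b *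
        ∑ y, bridgeAt qref n.castSucc y a b * ∑ z, condTrans qref n y z b * f y z =
      ∑ y, ∑ z, pairMarg q n y z * f y z := by
  simp_rw [← hR.sum_endMarg_mul_bridgeAt_mul_condTrans hend hqref hM n, Finset.sum_mul,
    Finset.mul_sum, mul_assoc]
  exact Finset.sum_comm_cycle.trans (Finset.sum_congr rfl fun _ _ => Finset.sum_comm_cycle)

end Reciprocal

noncomputable def markovLoss (qref q m : Traj X N → ℝ) : ℝ :=
  ∑ a : X, ∑ b : X, endMarg q a b *
    ((∑ k : Fin N, ∑ y : X, bridgeAt qref k.castSucc.castSucc y a b *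
        KLd (fun z : X => condTrans qref k.castSucc y z b) (fun z : X => transP m k.castSucc y z)) -
      ∑ y : X, bridgeAt qref ((Fin.last N).castSucc) y a b * Real.log (transP m (Fin.last N) y b))

noncomputable def transLogLik (q m : Traj X N → ℝ) : ℝ :=
  ∑ n, ∑ y, ∑ z, pairMarg q n y z * Real.log (transP m n y z)

theorem exists_markovLoss_eq_sub_transLogLik {qref q : Traj X N → ℝ} (hR : IsReciprocal qref q)
    (hend : ∀ a b, 0 < endMarg q a b) (hqref : ∀ ω, 0 < qref ω) (hM : IsMarkov qref) :
    ∃ C, ∀ m, (∀ n y z, transP m n y z ≠ 0) → markovLoss qref q m = C - transLogLik q m := by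
  refine ⟨∑ a, ∑ b, endMarg q a b * ∑ k : Fin N, ∑ y, bridgeAt qref k.castSucc.castSucc y a b *
      ∑ z, condTrans qref k.castSucc y z b * Real.log (condTrans qref k.castSucc y z b),
    fun m hm => ?_⟩
  have hlast : ∀ a b, ∑ y, bridgeAt qref (Fin.last N).castSucc y a b *
        Real.log (transP m (Fin.last N) y b) =
      ∑ y, bridgeAt qref (Fin.last N).castSucc y a b *
        ∑ z, condTrans qref (Fin.last N) y z b * Real.log (transP m (Fin.last N) y z) := by
    simp [condTrans_last hqref]
  calc markovLoss qref q m
      = ∑ a, ∑ b, (endMarg q a b * ∑ k : Fin N, ∑ y, bridgeAt qref k.castSucc.castSucc y a b *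
            ∑ z, condTrans qref k.castSucc y z b * Real.log (condTrans qref k.castSucc y z b) -
          ∑ n, endMarg q a b * ∑ y, bridgeAt qref n.castSucc y a b *
            ∑ z, condTrans qref n y z b * Real.log (transP m n y z)) := by
        refine Finset.sum_congr rfl fun a _ => Finset.sum_congr rfl fun b _ => ?_
        rw [hlast, Fin.sum_univ_castSucc]
        simp only [KLd_eq_sub _ _ (hm _ _), mul_sub, Finset.sum_sub_distrib, Finset.mul_sum]
        ring
    _ = _ := by
        simp only [Finset.sum_sub_distrib, transLogLik,
          ← hR.sum_endMarg_mul_sum_bridgeAt_mul_sum_condTrans hend hqref hM]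
        exact congrArg _ ((Finset.sum_congr rfl fun _ _ => Finset.sum_comm).trans Finset.sum_comm)

section LogLik

variable {q m : Traj X N → ℝ}

theorem transLogLik_sub_transLogLik (hq : ∀ ω, 0 < q ω) (hm : ∀ n y z, 0 < transP m n y z)
    (hm1 : ∀ n y, ∑ z, transP m n y z = 1) :
    transLogLik q q - transLogLik q m = ∑ n, ∑ y, ∑ z,
      timeMarg q n.castSucc y * (transP m n y z * klFun (transP q n y z / transP m n y z)) := by
  have hs : ∀ n y, timeMarg q (Fin.castSucc n) y ≠ 0 := fun n y => (timeMarg_pos hq _ y).ne'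
  simp only [transLogLik, ← Finset.sum_sub_distrib]
  refine Finset.sum_congr rfl fun n _ => Finset.sum_congr rfl fun y _ => ?_
  simp only [mul_klFun_div (transP_pos hq n y _) (hm n y _), ← timeMarg_mul_transP (hs n y),
    mul_add, Finset.sum_add_distrib, ← Finset.mul_sum, Finset.sum_sub_distrib, hm1,
    sum_transP (hs n y), sub_self, mul_zero, add_zero]
  rw [← Finset.sum_sub_distrib, Finset.mul_sum]
  exact Finset.sum_congr rfl fun z _ => by ring

theorem timeMarg_mul_transP_mul_klFun_nonneg (hq : ∀ ω, 0 < q ω)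
    (hm : ∀ n y z, 0 < transP m n y z) (n : Fin (N + 1)) (y z : X) :
    0 ≤ timeMarg q n.castSucc y * (transP m n y z * klFun (transP q n y z / transP m n y z)) :=
  mul_nonneg (timeMarg_pos hq _ y).le <| mul_nonneg (hm n y z).le <|
    klFun_nonneg (div_pos (transP_pos hq n y z) (hm n y z)).le

theorem transLogLik_le (hq : ∀ ω, 0 < q ω) (hm : ∀ n y z, 0 < transP m n y z)
    (hm1 : ∀ n y, ∑ z, transP m n y z = 1) : transLogLik q m ≤ transLogLik q q := by
  rw [← sub_nonneg, transLogLik_sub_transLogLik hq hm hm1]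
  exact Finset.sum_nonneg fun n _ => Finset.sum_nonneg fun y _ => Finset.sum_nonneg fun z _ =>
    timeMarg_mul_transP_mul_klFun_nonneg hq hm n y z

theorem transP_eq_of_transLogLik_eq (hq : ∀ ω, 0 < q ω) (hm : ∀ n y z, 0 < transP m n y z)
    (hm1 : ∀ n y, ∑ z, transP m n y z = 1) (h : transLogLik q m = transLogLik q q) :
    transP m = transP q := by
  have hterm := timeMarg_mul_transP_mul_klFun_nonneg hq hm
  have hzero := transLogLik_sub_transLogLik hq hm hm1
  rw [h, sub_self, eq_comm, Finset.sum_eq_zero_iff_of_nonneg fun n _ =>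
    Finset.sum_nonneg fun y _ => Finset.sum_nonneg fun z _ => hterm n y z] at hzero
  funext n y z
  have hnz := (Finset.sum_eq_zero_iff_of_nonneg fun z _ => hterm n y z).mp
    ((Finset.sum_eq_zero_iff_of_nonneg fun y _ => Finset.sum_nonneg fun z _ => hterm n y z).mp
      (hzero n (mem_univ _)) y (mem_univ _)) z (mem_univ _)
  have hkl : klFun (transP q n y z / transP m n y z) = 0 := by
    simpa [(timeMarg_pos hq _ y).ne', (hm n y z).ne'] using hnz
  rw [klFun_eq_zero_iff (div_pos (transP_pos hq n y z) (hm n y z)).le,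
    div_eq_one_iff_eq (hm n y z).ne'] at hkl
  exact hkl.symm

end LogLik

theorem markov_proj_minimizes_L_general
    {X : Type*} [Fintype X] [DecidableEq X] {N : ℕ}
    (qref : Traj X N → ℝ) (hqrefpos : ∀ ω, 0 < qref ω)
    (hqrefM : IsMarkov qref)
    (q : Traj X N → ℝ) (hqR : IsReciprocal qref q)
    (hqend : ∀ a b : X, 0 < endMarg q a b)
    (L : (Traj X N → ℝ) → ℝ)
    (hL : ∀ m : Traj X N → ℝ, L m =
      ∑ a : X, ∑ b : X, endMarg q a b *
        ((∑ k : Fin N, ∑ y : X, bridgeAt qref k.castSucc.castSucc y a b *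
            KLd (fun z : X => condTrans qref k.castSucc y z b)
                (fun z : X => transP m k.castSucc y z)) -
          ∑ y : X, bridgeAt qref ((Fin.last N).castSucc) y a b *
            Real.log (transP m (Fin.last N) y b))) :
    (∀ m : Traj X N → ℝ, IsPMF m → IsMarkov m →
        (∀ (n : Fin (N + 1)) (y z : X), 0 < transP m n y z) →
        (∀ x, timeMarg m 0 x = timeMarg q 0 x) →
        L (projM q) ≤ L m) ∧
    (∀ m : Traj X N → ℝ, IsPMF m → IsMarkov m →
        (∀ (n : Fin (N + 1)) (y z : X), 0 < transP m n y z) →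
        (∀ x, timeMarg m 0 x = timeMarg q 0 x) →
        L m = L (projM q) → m = projM q) := by
  have hq : ∀ ω, 0 < q ω := hqR.pos hqend hqrefpos
  obtain ⟨C, hC⟩ := exists_markovLoss_eq_sub_transLogLik hqR hqend hqrefpos hqrefM
  have hLm : ∀ m, (∀ n y z, 0 < transP m n y z) → L m = C - transLogLik q m :=
    fun m hm => (hL m).trans (hC m fun n y z => (hm n y z).ne')
  have hLproj : L (projM q) = C - transLogLik q q := by
    rw [hLm _ (transP_projM hq ▸ transP_pos hq), transLogLik, transP_projM hq, transLogLik]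
  refine ⟨fun m _ hmM hmT hm0 => ?_, fun m _ hmM hmT hm0 heq => ?_⟩
  · have hrows := hmM.sum_transP (fun x => hm0 x ▸ timeMarg_pos hq 0 x) hmT
    rw [hLproj, hLm m hmT]
    linarith [transLogLik_le hq hmT hrows]
  · have hrows := hmM.sum_transP (fun x => hm0 x ▸ timeMarg_pos hq 0 x) hmT
    have hT := transP_eq_of_transLogLik_eq hq hmT hrows (by linarith [hLm m hmT])
    exact hmM.eq_projM (funext hm0) hT

/-- The Markovian projection minimizes the diffusion-style loss `L`.
For a reciprocal process `q` with full-support endpoint coupling, among Markov processes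
`m` with full-support transitions and `m(x_0) = q(x_0)`, the Markovian projection
`proj_M(q)` is the unique minimizer of
`L(m) = E_{q(x_0,x_1)}[ Σ_{n=1}^N E_{q^ref(x_{t_{n-1}}|x_0,x_1)}
  KL(q^ref(x_{t_n}|x_{t_{n-1}},x_1) ‖ m(x_{t_n}|x_{t_{n-1}}))
  − E_{q^ref(x_{t_N}|x_0,x_1)}[log m(x_1|x_{t_N})] ]`. -/
theorem markov_proj_minimizes_L
    {X : Type*} [Fintype X] [DecidableEq X] [Nonempty X] {N : ℕ} (hN : 1 ≤ N)
    (qref : Traj X N → ℝ) (hqref : IsPMF qref) (hqrefpos : ∀ ω, 0 < qref ω)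
    (hqrefM : IsMarkov qref)
    (q : Traj X N → ℝ) (hq : IsPMF q) (hqR : IsReciprocal qref q)
    (hqend : ∀ a b : X, 0 < endMarg q a b)
    (L : (Traj X N → ℝ) → ℝ)
    (hL : ∀ m : Traj X N → ℝ, L m =
      ∑ a : X, ∑ b : X, endMarg q a b *
        ((∑ k : Fin N, ∑ y : X, bridgeAt qref k.castSucc.castSucc y a b *
            KLd (fun z : X => condTrans qref k.castSucc y z b)
                (fun z : X => transP m k.castSucc y z)) -
          ∑ y : X, bridgeAt qref ((Fin.last N).castSucc) y a b *
            Real.log (transP m (Fin.last N) y b))) :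
    (∀ m : Traj X N → ℝ, IsPMF m → IsMarkov m →
        (∀ (n : Fin (N + 1)) (y z : X), 0 < transP m n y z) →
        (∀ x, timeMarg m 0 x = timeMarg q 0 x) →
        L (projM q) ≤ L m) ∧
    (∀ m : Traj X N → ℝ, IsPMF m → IsMarkov m →
        (∀ (n : Fin (N + 1)) (y z : X), 0 < transP m n y z) →
        (∀ x, timeMarg m 0 x = timeMarg q 0 x) →
        L m = L (projM q) → m = projM q) :=
  markov_proj_minimizes_L_general qref hqrefpos hqrefM q hqR hqend L hL
end

section
/- Let X be a nonempty finite set, N ≥ 1, p_0 and p_1 probability mass functions on X with full support, and q^ref a process on X^{N+2} with full support. Let s* be the unique minimizer of KL( s(x_0, x_1) || q^ref(x_0, x_1) ) over couplings s ∈ Π(p_0, p_1), where q^ref(x_0, x_1) is the endpoint marginal of q^ref. Then the process q*(x_0, x_in, x_1) := s*(x_0, x_1) · q^ref(x_in | x_0, x_1) is the unique minimizer of KL( q || q^ref ) over q ∈ Π_N(p_0, p_1), and the two minimal KL values coincide. -/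
open Finset

variable {X : Type*} [Fintype X] [DecidableEq X] {N : ℕ}

/-!
Chain rule for the relative entropy: conditioning on the endpoints splits `KL(q ‖ q^ref)` into
the relative entropy of the endpoint laws plus that of `q` against the process with the same
endpoint law and the bridges of `q^ref`. The second term is nonnegative by Gibbs' inequality
and vanishes exactly when `q` has the bridges of `q^ref`, while the first is minimized over
`Π_N(p₀, p₁)` precisely when the endpoint law of `q` is `s*`.
-/

open Real InformationTheory

section Gibbs

variable {Z : Type*} [Fintype Z] {a b : Z → ℝ}

lemma mul_log_div_sub_eq_mul_klFun (x : ℝ) {y : ℝ} (hy : 0 < y) :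
    x * log (x / y) - (x - y) = y * klFun (x / y) := by
  rw [klFun]
  field_simp
  ring

lemma sub_le_mul_log_div {x y : ℝ} (hx : 0 ≤ x) (hy : 0 ≤ y) (hxy : y = 0 → x = 0) :
    x - y ≤ x * log (x / y) := by
  rcases hy.eq_or_lt with rfl | hy
  · simp [hxy rfl]
  · nlinarith [mul_log_div_sub_eq_mul_klFun x hy, klFun_nonneg (div_nonneg hx hy.le)]

lemma eq_of_mul_log_div_eq_sub {x y : ℝ} (hx : 0 ≤ x) (hy : 0 ≤ y) (hxy : y = 0 → x = 0)
    (h : x * log (x / y) = x - y) : x = y := by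
  rcases hy.eq_or_lt with rfl | hy
  · exact hxy rfl
  · have hkl : klFun (x / y) = 0 := by
      have := mul_log_div_sub_eq_mul_klFun x hy
      rw [h, sub_self, eq_comm, mul_eq_zero] at this
      exact this.resolve_left hy.ne'
    rwa [klFun_eq_zero_iff (div_nonneg hx hy.le), div_eq_one_iff_eq hy.ne'] at hkl

lemma KLd_self (a : Z → ℝ) : KLd a a = 0 :=
  sum_eq_zero fun z _ => by
    rcases eq_or_ne (a z) 0 with h | h <;> simp [h]

lemma sum_mul_log_div_sub_eq_KLd (hsum : ∑ z, a z = ∑ z, b z) :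
    ∑ z, (a z * log (a z / b z) - (a z - b z)) = KLd a b := by
  rw [sum_sub_distrib, sum_sub_distrib, hsum, sub_self, sub_zero, KLd]

theorem KLd_nonneg (ha : ∀ z, 0 ≤ a z) (hb : ∀ z, 0 ≤ b z) (hab : ∀ z, b z = 0 → a z = 0)
    (hsum : ∑ z, a z = ∑ z, b z) : 0 ≤ KLd a b := by
  rw [← sum_mul_log_div_sub_eq_KLd hsum]
  exact sum_nonneg fun z _ => sub_nonneg.2 (sub_le_mul_log_div (ha z) (hb z) (hab z))

theorem eq_of_KLd_eq_zero (ha : ∀ z, 0 ≤ a z) (hb : ∀ z, 0 ≤ b z)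
    (hab : ∀ z, b z = 0 → a z = 0) (hsum : ∑ z, a z = ∑ z, b z) (h : KLd a b = 0) : a = b := by
  rw [← sum_mul_log_div_sub_eq_KLd hsum, sum_eq_zero_iff_of_nonneg
    fun z _ => sub_nonneg.2 (sub_le_mul_log_div (ha z) (hb z) (hab z))] at h
  exact funext fun z => eq_of_mul_log_div_eq_sub (ha z) (hb z) (hab z)
    (sub_eq_zero.1 (h z (mem_univ z)))

end Gibbs

section Endpoints

variable {q : Traj X N → ℝ}

omit [Fintype X] [DecidableEq X] in
def endpoints (ω : Traj X N) : X × X := (ω 0, ω (Fin.last (N + 1)))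

noncomputable def endCoupling (q : Traj X N → ℝ) (p : X × X) : ℝ := endMarg q p.1 p.2

lemma endCoupling_eq_sum_filter (q : Traj X N → ℝ) (p : X × X) :
    endCoupling q p = ∑ ω with endpoints ω = p, q ω := by
  simp [sum_filter, endCoupling, endMarg, endpoints, Prod.ext_iff]

lemma sum_mul_endpoints (g : Traj X N → ℝ) (F : X × X → ℝ) :
    ∑ ω, g ω * F (endpoints ω) = ∑ p, endCoupling g p * F p := by
  rw [← sum_fiberwise univ endpoints]
  refine sum_congr rfl fun p _ => ?_
  rw [endCoupling_eq_sum_filter, sum_mul]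
  exact sum_congr rfl fun ω hω => by rw [(mem_filter.1 hω).2]

lemma sum_endCoupling (q : Traj X N → ℝ) : ∑ p, endCoupling q p = ∑ ω, q ω := by
  simpa using (sum_mul_endpoints q 1).symm

lemma sum_endCoupling_fst (q : Traj X N → ℝ) (a : X) :
    ∑ b, endCoupling q (a, b) = timeMarg q 0 a := by
  calc ∑ b, endCoupling q (a, b)
      = ∑ p, endCoupling q p * if p.1 = a then 1 else 0 := by
        simp_rw [Fintype.sum_prod_type, mul_ite, mul_one, mul_zero, sum_ite_irrel,
          sum_const_zero, Fintype.sum_ite_eq']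
    _ = ∑ ω, q ω * if (endpoints ω).1 = a then 1 else 0 := (sum_mul_endpoints q _).symm
    _ = timeMarg q 0 a := sum_congr rfl fun ω _ => by rw [mul_ite, mul_one, mul_zero]; rfl

lemma sum_endCoupling_snd (q : Traj X N → ℝ) (b : X) :
    ∑ a, endCoupling q (a, b) = timeMarg q (Fin.last (N + 1)) b := by
  calc ∑ a, endCoupling q (a, b)
      = ∑ p, endCoupling q p * if p.2 = b then 1 else 0 := by
        simp [Fintype.sum_prod_type]
    _ = ∑ ω, q ω * if (endpoints ω).2 = b then 1 else 0 := (sum_mul_endpoints q _).symm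
    _ = timeMarg q (Fin.last (N + 1)) b :=
      sum_congr rfl fun ω _ => by rw [mul_ite, mul_one, mul_zero]; rfl

lemma endCoupling_nonneg (hq : ∀ ω, 0 ≤ q ω) (p : X × X) : 0 ≤ endCoupling q p := by
  rw [endCoupling_eq_sum_filter]
  exact sum_nonneg fun ω _ => hq ω

omit [Fintype X] [DecidableEq X] in
lemma endpoints_glue (a : X) (v : Fin N → X) (b : X) : endpoints (glue a v b) = (a, b) := by
  simp [endpoints, glue, ← Fin.succ_last]

lemma endCoupling_pos (hq : ∀ ω, 0 < q ω) (p : X × X) : 0 < endCoupling q p := by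
  rw [endCoupling_eq_sum_filter]
  exact sum_pos (fun ω _ => hq ω)
    ⟨glue p.1 (fun _ => p.1) p.2, by simp [endpoints_glue]⟩

lemma le_endCoupling (hq : ∀ ω, 0 ≤ q ω) (ω : Traj X N) : q ω ≤ endCoupling q (endpoints ω) := by
  rw [endCoupling_eq_sum_filter]
  exact single_le_sum (fun ω _ => hq ω) (by simp)

end Endpoints

section BridgeMixture

variable {q qref : Traj X N → ℝ}

/-- `s(x₀, x₁) · qref(x_in | x₀, x₁)`: endpoint law `s`, bridges of `qref`. -/
noncomputable def bridgeMixture (qref : Traj X N → ℝ) (s : X × X → ℝ) (ω : Traj X N) : ℝ :=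
  s (endpoints ω) * (qref ω / endCoupling qref (endpoints ω))

lemma bridgeMixture_nonneg (hqref : ∀ ω, 0 ≤ qref ω) {s : X × X → ℝ} (hs : ∀ p, 0 ≤ s p)
    (ω : Traj X N) : 0 ≤ bridgeMixture qref s ω :=
  mul_nonneg (hs _) (div_nonneg (hqref ω) (endCoupling_nonneg hqref _))

variable (hqref : ∀ ω, 0 < qref ω)
include hqref

lemma endCoupling_bridgeMixture (s : X × X → ℝ) : endCoupling (bridgeMixture qref s) = s := by
  funext p
  calc endCoupling (bridgeMixture qref s) p
      = ∑ ω with endpoints ω = p, s p / endCoupling qref p * qref ω := by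
        rw [endCoupling_eq_sum_filter]
        refine sum_congr rfl fun ω hω => ?_
        rw [bridgeMixture, (mem_filter.1 hω).2]
        ring
    _ = s p := by
      rw [← mul_sum, ← endCoupling_eq_sum_filter, div_mul_cancel₀ _ (endCoupling_pos hqref p).ne']

lemma eq_zero_of_bridgeMixture_endCoupling_eq_zero (hq : ∀ ω, 0 ≤ q ω) {ω : Traj X N}
    (h : bridgeMixture qref (endCoupling q) ω = 0) : q ω = 0 := by
  have hE := endCoupling_pos hqref (endpoints ω)
  have hr : endCoupling q (endpoints ω) = 0 := by
    simpa [bridgeMixture, (hqref ω).ne', hE.ne'] using h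
  exact le_antisymm (hr ▸ le_endCoupling hq ω) (hq ω)

lemma sum_bridgeMixture_endCoupling (q : Traj X N → ℝ) :
    ∑ ω, bridgeMixture qref (endCoupling q) ω = ∑ ω, q ω := by
  rw [← sum_endCoupling, endCoupling_bridgeMixture hqref, sum_endCoupling]

theorem KLd_eq_KLd_bridgeMixture_add (hq : ∀ ω, 0 ≤ q ω) :
    KLd q qref = KLd q (bridgeMixture qref (endCoupling q)) +
      KLd (endCoupling q) (endCoupling qref) := by
  have hterm : ∀ ω, q ω * log (q ω / qref ω) =
      q ω * log (q ω / bridgeMixture qref (endCoupling q) ω) +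
        q ω * log (endCoupling q (endpoints ω) / endCoupling qref (endpoints ω)) := by
    intro ω
    rcases (hq ω).eq_or_lt with h0 | hpos
    · simp [← h0]
    · have hr := hpos.trans_le (le_endCoupling hq ω)
      have hE := endCoupling_pos hqref (endpoints ω)
      have hω := hqref ω
      rw [← mul_add, bridgeMixture, ← log_mul (by positivity) (by positivity)]
      congr 2
      field_simp
  rw [KLd, sum_congr rfl fun ω _ => hterm ω, sum_add_distrib,
    sum_mul_endpoints q fun p => log (endCoupling q p / endCoupling qref p)]
  rfl

theorem KLd_bridgeMixture_endCoupling_nonneg (hq : ∀ ω, 0 ≤ q ω) :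
    0 ≤ KLd q (bridgeMixture qref (endCoupling q)) :=
  KLd_nonneg hq (bridgeMixture_nonneg (fun ω => (hqref ω).le) (endCoupling_nonneg hq))
    (fun _ => eq_zero_of_bridgeMixture_endCoupling_eq_zero hqref hq)
    (sum_bridgeMixture_endCoupling hqref q).symm

theorem eq_bridgeMixture_of_KLd_eq_zero (hq : ∀ ω, 0 ≤ q ω)
    (h : KLd q (bridgeMixture qref (endCoupling q)) = 0) :
    q = bridgeMixture qref (endCoupling q) :=
  eq_of_KLd_eq_zero hq (bridgeMixture_nonneg (fun ω => (hqref ω).le) (endCoupling_nonneg hq))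
    (fun _ => eq_zero_of_bridgeMixture_endCoupling_eq_zero hqref hq)
    (sum_bridgeMixture_endCoupling hqref q).symm h

theorem KLd_bridgeMixture {s : X × X → ℝ} (hs : ∀ p, 0 ≤ s p) :
    KLd (bridgeMixture qref s) qref = KLd s (endCoupling qref) := by
  rw [KLd_eq_KLd_bridgeMixture_add hqref (bridgeMixture_nonneg (fun ω => (hqref ω).le) hs),
    endCoupling_bridgeMixture hqref, KLd_self, zero_add]

end BridgeMixture

section Couplings

variable {p0 p1 : X → ℝ}

theorem InPiN.endCoupling {q : Traj X N → ℝ} (hq : InPiN p0 p1 q) :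
    InPi2 p0 p1 (endCoupling q) :=
  ⟨⟨endCoupling_nonneg hq.1.1, (sum_endCoupling q).trans hq.1.2⟩,
    fun a => (sum_endCoupling_fst q a).trans (hq.2.1 a),
    fun b => (sum_endCoupling_snd q b).trans (hq.2.2 b)⟩

theorem InPi2.bridgeMixture {qref : Traj X N → ℝ} (hqref : ∀ ω, 0 < qref ω)
    {s : X × X → ℝ} (hs : InPi2 p0 p1 s) : InPiN p0 p1 (bridgeMixture qref s) := by
  refine ⟨⟨bridgeMixture_nonneg (fun ω => (hqref ω).le) hs.1.1, ?_⟩, fun a => ?_, fun b => ?_⟩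
  · rw [← sum_endCoupling, endCoupling_bridgeMixture hqref, hs.1.2]
  · rw [← sum_endCoupling_fst, endCoupling_bridgeMixture hqref, hs.2.1]
  · rw [← sum_endCoupling_snd, endCoupling_bridgeMixture hqref, hs.2.2]

end Couplings

theorem static_to_dynamic_sb_general
    {X : Type*} [Fintype X] [DecidableEq X] {N : ℕ}
    (p0 p1 : X → ℝ)
    (qref : Traj X N → ℝ) (hqrefpos : ∀ ω, 0 < qref ω)
    (sstar : X × X → ℝ) (hsstar : InPi2 p0 p1 sstar)
    (hsmin : ∀ s : X × X → ℝ, InPi2 p0 p1 s →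
      KLd sstar (fun p : X × X => endMarg qref p.1 p.2) ≤
        KLd s (fun p : X × X => endMarg qref p.1 p.2))
    (hsuniq : ∀ s : X × X → ℝ, InPi2 p0 p1 s →
      KLd s (fun p : X × X => endMarg qref p.1 p.2) =
        KLd sstar (fun p : X × X => endMarg qref p.1 p.2) → s = sstar)
    (qstar : Traj X N → ℝ)
    (hqstar : ∀ ω : Traj X N, qstar ω =
      sstar (ω 0, ω (Fin.last (N + 1))) *
        (qref ω / endMarg qref (ω 0) (ω (Fin.last (N + 1))))) :
    InPiN p0 p1 qstar ∧
    (∀ q : Traj X N → ℝ, InPiN p0 p1 q → KLd qstar qref ≤ KLd q qref) ∧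
    (∀ q : Traj X N → ℝ, InPiN p0 p1 q → KLd q qref = KLd qstar qref → q = qstar) ∧
    KLd qstar qref = KLd sstar (fun p : X × X => endMarg qref p.1 p.2) := by
  obtain rfl : qstar = bridgeMixture qref sstar := funext hqstar
  have hvalue : KLd (bridgeMixture qref sstar) qref = KLd sstar (endCoupling qref) :=
    KLd_bridgeMixture hqrefpos hsstar.1.1
  refine ⟨hsstar.bridgeMixture hqrefpos, fun q hq => ?_, fun q hq heq => ?_, hvalue⟩
  all_goals
    have hend : KLd sstar (endCoupling qref) ≤ KLd (endCoupling q) (endCoupling qref) :=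
      hsmin _ hq.endCoupling
    have hbridge := KLd_bridgeMixture_endCoupling_nonneg hqrefpos hq.1.1
    have hchain := KLd_eq_KLd_bridgeMixture_add hqrefpos hq.1.1
  · linarith
  · rw [eq_bridgeMixture_of_KLd_eq_zero hqrefpos hq.1.1 (by linarith),
      hsuniq _ hq.endCoupling
        (show KLd (endCoupling q) (endCoupling qref) = KLd sstar (endCoupling qref) by linarith)]

/-- Static-to-dynamic SB. If `s*` is the unique minimizer of
`KL(s ‖ q^ref(x_0,x_1))` over couplings `Π(p_0,p_1)`, then
`q*(x_0, x_in, x_1) = s*(x_0,x_1) · q^ref(x_in|x_0,x_1)` is the unique minimizer of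
`KL(q ‖ q^ref)` over `Π_N(p_0,p_1)`, and the two minimal KL values coincide. -/
theorem static_to_dynamic_sb
    {X : Type*} [Fintype X] [DecidableEq X] [Nonempty X] {N : ℕ} (hN : 1 ≤ N)
    (p0 p1 : X → ℝ) (hp0 : IsPMF p0) (hp0pos : ∀ x, 0 < p0 x)
    (hp1 : IsPMF p1) (hp1pos : ∀ x, 0 < p1 x)
    (qref : Traj X N → ℝ) (hqref : IsPMF qref) (hqrefpos : ∀ ω, 0 < qref ω)
    (sstar : X × X → ℝ) (hsstar : InPi2 p0 p1 sstar)
    (hsmin : ∀ s : X × X → ℝ, InPi2 p0 p1 s →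
      KLd sstar (fun p : X × X => endMarg qref p.1 p.2) ≤
        KLd s (fun p : X × X => endMarg qref p.1 p.2))
    (hsuniq : ∀ s : X × X → ℝ, InPi2 p0 p1 s →
      KLd s (fun p : X × X => endMarg qref p.1 p.2) =
        KLd sstar (fun p : X × X => endMarg qref p.1 p.2) → s = sstar)
    (qstar : Traj X N → ℝ)
    (hqstar : ∀ ω : Traj X N, qstar ω =
      sstar (ω 0, ω (Fin.last (N + 1))) *
        (qref ω / endMarg qref (ω 0) (ω (Fin.last (N + 1))))) :
    InPiN p0 p1 qstar ∧
    (∀ q : Traj X N → ℝ, InPiN p0 p1 q → KLd qstar qref ≤ KLd q qref) ∧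
    (∀ q : Traj X N → ℝ, InPiN p0 p1 q → KLd q qref = KLd qstar qref → q = qstar) ∧
    KLd qstar qref = KLd sstar (fun p : X × X => endMarg qref p.1 p.2) :=
  static_to_dynamic_sb_general p0 p1 qref hqrefpos sstar hsstar hsmin hsuniq qstar hqstar
end
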